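/- arXiv:math/0508605 — 4 statements merged into one kernel-verified Lean document; each statement's English description precedes it below -/
import Mathlib

section
/- Right-tail asymptotics of the exact truncated MGF with finite upper truncation point: if b < ∞, F₀(b) − F₀(a) > 0, and f₀ has a left limit at b, i.e., f₀(x) → f₀(b−) as x ↑ b, then θ e^{-θ b} M_{(a,b)}(θ) → f₀(b−) / (F₀(b) − F₀(a)) as θ → ∞; equivalently, M_{(a,b)}(θ) ∼ θ^{-1} e^{θ b} f₀(b−) / (F₀(b) − F₀(a)). -/
open MeasureTheory Set Filter

/-- The CDF `F₀` evaluated at an extended-real point `y`: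
`F₀(y) = P(X ≤ y)`, with `F₀(-∞) = 0` and `F₀(∞) = 1`. -/
noncomputable def F0 (f₀ : ℝ → ℝ) (y : EReal) : ℝ := ∫ x in {x : ℝ | (x : EReal) ≤ y}, f₀ x

/-- The truncated MGF `M_{(a,b)}(θ) = (F₀(b) − F₀(a))⁻¹ ∫_a^b e^{θx} f₀(x) dx`,
where `-∞ ≤ a < b ≤ ∞`. -/
noncomputable def Mtrunc (f₀ : ℝ → ℝ) (a b : EReal) (θ : ℝ) : ℝ :=
  (F0 f₀ b - F0 f₀ a)⁻¹ *
    ∫ x in {x : ℝ | a < (x : EReal) ∧ (x : EReal) < b}, Real.exp (θ * x) * f₀ x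

/-!
Since `θ e^{-θb} M_{(a,b)}(θ) = (F₀(b) - F₀(a))⁻¹ ∫_a^b θ e^{θ(x-b)} f₀(x) dx`, this is a statement
about integrating `f₀` against the kernels `θ e^{θ(x-b)}` on `x < b`. These are one-sided peak
functions at `b`: nonnegative, of mass `1 - e^{θ(c-b)} → 1` on every `(c, b)`, and uniformly small
on every `x ≤ b - r`. So the integrals converge to the one-sided limit `f₀(b-)` of the integrable
function `f₀`.
-/

open Real Topology

theorem tendstoUniformlyOn_mul_exp_mul_sub_Iic (b : ℝ) {r : ℝ} (hr : 0 < r) :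
    TendstoUniformlyOn (fun θ x : ℝ => θ * exp (θ * (x - b))) 0 atTop (Iic (b - r)) := by
  have hdecay : Tendsto (fun θ : ℝ => θ * exp (-r * θ)) atTop (𝓝 0) := by
    simpa using tendsto_rpow_mul_exp_neg_mul_atTop_nhds_zero 1 r hr
  rw [Metric.tendstoUniformlyOn_iff]
  intro ε hε
  filter_upwards [hdecay.eventually (gt_mem_nhds hε), eventually_ge_atTop 0] with θ hθε hθ x hx
  have hexp : exp (θ * (x - b)) ≤ exp (-r * θ) := by
    have hxb : x - b ≤ -r := by linarith [mem_Iic.1 hx]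
    exact exp_le_exp.2 (by nlinarith)
  rw [Pi.zero_apply, dist_zero_left, Real.norm_of_nonneg (by positivity)]
  calc θ * exp (θ * (x - b)) ≤ θ * exp (-r * θ) := by gcongr
    _ < ε := hθε

theorem integral_Ioo_mul_exp_mul_sub {b c : ℝ} (hcb : c ≤ b) (θ : ℝ) :
    ∫ x in Ioo c b, θ * exp (θ * (x - b)) = 1 - exp (θ * (c - b)) := by
  have hderiv : ∀ x ∈ uIcc c b,
      HasDerivAt (fun x => exp (θ * (x - b))) (θ * exp (θ * (x - b))) x := by
    intro x _
    simpa [mul_comm] using ((hasDerivAt_id x).sub_const b).const_mul θ |>.exp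
  rw [← integral_Ioc_eq_integral_Ioo, ← intervalIntegral.integral_of_le hcb,
    intervalIntegral.integral_eq_sub_of_hasDerivAt hderiv
      ((by fun_prop : Continuous _).intervalIntegrable c b)]
  simp

theorem tendsto_integral_Ioo_mul_exp_mul_sub {b c : ℝ} (hcb : c < b) :
    Tendsto (fun θ => ∫ x in Ioo c b, θ * exp (θ * (x - b))) atTop (𝓝 1) := by
  simp_rw [integral_Ioo_mul_exp_mul_sub hcb.le]
  have hexp : Tendsto (fun θ => exp (θ * (c - b))) atTop (𝓝 0) :=
    tendsto_exp_atBot.comp (tendsto_id.atTop_mul_const_of_neg (sub_neg.2 hcb))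
  simpa using hexp.const_sub 1

theorem tendsto_setIntegral_mul_exp_mul_sub_smul {E : Type*} [NormedAddCommGroup E]
    [NormedSpace ℝ E] [CompleteSpace E] {f : ℝ → E} {s : Set ℝ} {b : ℝ} {L : E}
    (hs : MeasurableSet s) (hsb : s ⊆ Iio b) (hs_nhds : s ∈ 𝓝[<] b) (hf : IntegrableOn f s)
    (hfL : Tendsto f (𝓝[<] b) (𝓝 L)) :
    Tendsto (fun θ => ∫ x in s, (θ * exp (θ * (x - b))) • f x) atTop (𝓝 L) := by
  obtain ⟨c, hcb, hcs⟩ := mem_nhdsLT_iff_exists_Ioo_subset.1 hs_nhds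
  have hnhds_le : 𝓝[s] b ≤ 𝓝[<] b := nhdsWithin_mono b hsb
  refine tendsto_setIntegral_peak_smul_of_integrableOn_of_tendsto hs measurableSet_Ioo hcs
    (hnhds_le (Ioo_mem_nhdsLT hcb)) measure_Ioo_lt_top.ne ?_ ?_
    (tendsto_integral_Ioo_mul_exp_mul_sub hcb)
    (.of_forall fun θ => Continuous.aestronglyMeasurable (by fun_prop)) hf
    (hfL.mono_left hnhds_le)
  · filter_upwards [eventually_ge_atTop 0] with θ hθ x _ using by positivity
  · intro u hu hbu
    obtain ⟨r, hr, hball⟩ := Metric.isOpen_iff.1 hu b hbu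
    refine (tendstoUniformlyOn_mul_exp_mul_sub_Iic b hr).mono fun x hx => ?_
    have hxb : x < b := hsb hx.1
    have hrx : r ≤ dist x b := not_lt.1 fun h => hx.2 (hball h)
    rw [Real.dist_eq, abs_of_neg (sub_neg.2 hxb)] at hrx
    exact mem_Iic.2 (by linarith)

theorem truncated_mgf_right_tail_finite_upper_general
    (f₀ : ℝ → ℝ)
    (hf_prob : ∫ x : ℝ, f₀ x = 1)
    (a : EReal) (b : ℝ) (hab : a < (b : EReal))
    (f₀bminus : ℝ)
    (hleftlim : Tendsto f₀ (nhdsWithin b (Iio b)) (nhds f₀bminus)) :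
    Tendsto (fun θ : ℝ => θ * Real.exp (-θ * b) * Mtrunc f₀ a (b : EReal) θ)
      atTop (nhds (f₀bminus / (F0 f₀ (b : EReal) - F0 f₀ a))) := by
  set S : Set ℝ := {x : ℝ | a < (x : EReal) ∧ (x : EReal) < b}
  have hS : MeasurableSet S := measurable_coe_real_ereal measurableSet_Ioo
  have hSb : S ⊆ Iio b := fun x hx => EReal.coe_lt_coe_iff.1 hx.2
  have hS_nhds : S ∈ 𝓝[<] b := by
    obtain ⟨c, hac, hcb⟩ := EReal.exists_between_coe_real hab
    refine mem_of_superset (Ioo_mem_nhdsLT (EReal.coe_lt_coe_iff.1 hcb)) fun x hx => ?_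
    exact ⟨hac.trans (EReal.coe_lt_coe_iff.2 hx.1), EReal.coe_lt_coe_iff.2 hx.2⟩
  have hint : Integrable f₀ := .of_integral_ne_zero (by simp [hf_prob])
  have hpeak := (tendsto_setIntegral_mul_exp_mul_sub_smul hS hSb hS_nhds hint.integrableOn
    hleftlim).const_mul (F0 f₀ b - F0 f₀ a)⁻¹
  rw [div_eq_inv_mul]
  refine hpeak.congr fun θ => ?_
  rw [Mtrunc, mul_left_comm, ← integral_const_mul (θ * exp (-θ * b))]
  congr 2 with x
  rw [smul_eq_mul, mul_sub, sub_eq_neg_add, exp_add]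
  ring_nf

/-- **Right-tail asymptotics of the exact truncated MGF, finite upper truncation point**:
if `b < ∞`, `F₀(b) − F₀(a) > 0` and `f₀(x) → f₀(b−)` as `x ↑ b`, then
`θ e^{-θb} M_{(a,b)}(θ) → f₀(b−)/(F₀(b) − F₀(a))` as `θ → ∞`, i.e.
`M_{(a,b)}(θ) ∼ θ⁻¹ e^{θb} f₀(b−)/(F₀(b) − F₀(a))`. -/
theorem truncated_mgf_right_tail_finite_upper
    (f₀ : ℝ → ℝ) (hf_meas : Measurable f₀) (hf_nonneg : ∀ x, 0 ≤ f₀ x)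
    (hf_prob : ∫ x : ℝ, f₀ x = 1)
    (a : EReal) (b : ℝ) (hab : a < (b : EReal))
    (hFab : 0 < F0 f₀ (b : EReal) - F0 f₀ a)
    (f₀bminus : ℝ)
    (hleftlim : Tendsto f₀ (nhdsWithin b (Iio b)) (nhds f₀bminus)) :
    Tendsto (fun θ : ℝ => θ * Real.exp (-θ * b) * Mtrunc f₀ a (b : EReal) θ)
      atTop (nhds (f₀bminus / (F0 f₀ (b : EReal) - F0 f₀ a))) :=
  truncated_mgf_right_tail_finite_upper_general f₀ hf_prob a b hab f₀bminus hleftlim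
end

section
/- Theorem 4.1(i), right tail with finite upper truncation point: assume β = ∞, steepness (K₀'(θ) → ∞ as θ → ∞), that saddlepoints t_a, t_b exist with K₀'(t_a) = a and K₀'(t_b) = b, that F̂₀(b) − F̂₀(a) > 0, and that u_θ(y)/w_θ(y)³ → 0 as θ → ∞ for y = a and y = b. Then θ e^{-θ b} M̂_{(a,b)}(θ) → f̂₀(b) / (F̂₀(b) − F̂₀(a)) as θ → ∞; that is, M̂_{(a,b)}(θ) ∼ θ^{-1} e^{θ b} f̂₀(b) / (F̂₀(b) − F̂₀(a)). -/
open MeasureTheory Set Filter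

/-- The standard normal density `φ`. -/
noncomputable def stdPhiDens (x : ℝ) : ℝ := Real.exp (-x ^ 2 / 2) / Real.sqrt (2 * Real.pi)

/-- The standard normal CDF `Φ`. -/
noncomputable def stdPhi (x : ℝ) : ℝ := ∫ t in Iic x, stdPhiDens t

/-- The Lugannani–Rice quantity
`w_θ(y) = sgn(t_y − θ) √(2[(t_y − θ) y − K₀(t_y) + K₀(θ)])`,
where `t = t_y` is the saddlepoint for `y`. -/
noncomputable def wLR (K₀ : ℝ → ℝ) (θ y t : ℝ) : ℝ :=
  Real.sign (t - θ) * Real.sqrt (2 * ((t - θ) * y - K₀ t + K₀ θ))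

/-- The Lugannani–Rice quantity `u_θ(y) = (t_y − θ) √(K₀''(t_y))`. -/
noncomputable def uLR (K₀ : ℝ → ℝ) (θ t : ℝ) : ℝ :=
  (t - θ) * Real.sqrt (deriv (deriv K₀) t)

/-- The Lugannani–Rice CDF approximation (equation (19)):
`F̂_θ(y) = Φ(w_θ(y)) + φ(w_θ(y)) (w_θ(y)⁻¹ − u_θ(y)⁻¹)`,
where `t = t_y` is the saddlepoint for `y`. -/
noncomputable def FhatLR (K₀ : ℝ → ℝ) (θ y t : ℝ) : ℝ :=
  stdPhi (wLR K₀ θ y t) + stdPhiDens (wLR K₀ θ y t) * ((wLR K₀ θ y t)⁻¹ - (uLR K₀ θ t)⁻¹)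

/-- The saddlepoint density approximation
`f̂₀(y) = (2π K₀''(t_y))^{-1/2} exp(K₀(t_y) − t_y y)`. -/
noncomputable def fhatSP (K₀ : ℝ → ℝ) (y t : ℝ) : ℝ :=
  (Real.sqrt (2 * Real.pi * deriv (deriv K₀) t))⁻¹ * Real.exp (K₀ t - t * y)

lemma stdPhiDens_pos (x : ℝ) : 0 < stdPhiDens x := by
  unfold stdPhiDens
  have := Real.pi_pos
  positivity

lemma continuous_stdPhiDens : Continuous stdPhiDens := by
  unfold stdPhiDens
  fun_prop

lemma hasDerivAt_stdPhiDens (x : ℝ) : HasDerivAt stdPhiDens (-x * stdPhiDens x) x := by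
  have h1 : HasDerivAt (fun x : ℝ => -x ^ 2 / 2) (-x) x := by
    have := ((hasDerivAt_pow 2 x).neg).div_const 2
    refine this.congr_deriv ?_
    simp
    ring
  have h2 := (h1.exp).div_const (Real.sqrt (2 * Real.pi))
  unfold stdPhiDens
  refine h2.congr_deriv ?_
  ring

lemma integrable_stdPhiDens : Integrable stdPhiDens := by
  have h : Integrable (fun x : ℝ => Real.exp (-(1/2 : ℝ) * x ^ 2)) :=
    integrable_exp_neg_mul_sq (by norm_num)
  refine (h.div_const (Real.sqrt (2 * Real.pi))).congr (ae_of_all _ fun x => ?_)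
  unfold stdPhiDens
  rw [show -x ^ 2 / 2 = -(1/2 : ℝ) * x ^ 2 by ring]

lemma tendsto_inv_atBot_zero' : Tendsto (fun x : ℝ => x⁻¹) atBot (nhds 0) := by
  have h := (tendsto_neg_atBot_atTop (G := ℝ)).inv_tendsto_atTop
  have h2 := h.neg
  simp only [Pi.inv_apply, inv_neg, neg_neg, neg_zero] at h2
  exact h2

lemma tendsto_stdPhiDens_atBot : Tendsto stdPhiDens atBot (nhds 0) := by
  have h2 : Tendsto (fun x : ℝ => x ^ 2) atBot atTop := by
    refine Tendsto.congr (fun x => sq_abs x) ?_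
    exact (tendsto_pow_atTop two_ne_zero).comp tendsto_abs_atBot_atTop
  have h1 : Tendsto (fun x : ℝ => -x ^ 2 / 2) atBot atBot := by
    have := (tendsto_neg_atTop_atBot.comp h2).atBot_div_const (by norm_num : (0:ℝ) < 2)
    exact this
  have h3 := (Real.tendsto_exp_atBot.comp h1).div_const (Real.sqrt (2 * Real.pi))
  rw [zero_div] at h3
  refine h3.congr fun x => ?_
  simp [stdPhiDens, Function.comp]

lemma integrableOn_stdPhiDens_mul {c : ℝ} {h : ℝ → ℝ} (w : ℝ) (hw : w < 0)
    (hmeas : Measurable h) (hbd : ∀ x, x ≤ w → |h x| ≤ c) :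
    IntegrableOn (fun x => stdPhiDens x * h x) (Iic w) := by
  refine Integrable.mono' ((integrable_stdPhiDens.restrict).mul_const c) ?_ ?_
  · exact (continuous_stdPhiDens.measurable.mul hmeas).aestronglyMeasurable
  · rw [ae_restrict_iff' measurableSet_Iic]
    refine ae_of_all _ fun x hx => ?_
    have hφ := stdPhiDens_pos x
    rw [Real.norm_eq_abs, abs_mul, abs_of_pos hφ]
    exact mul_le_mul_of_nonneg_left (hbd x hx) hφ.le

lemma mills_FTC_upper {w : ℝ} (hw : w < 0) :
    ∫ x in Iic w, stdPhiDens x * (1 + 1/x^2) = -stdPhiDens w / w := by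
  have hint : IntegrableOn (fun x => stdPhiDens x * (1 + 1/x^2)) (Iic w) := by
    refine integrableOn_stdPhiDens_mul (c := 1 + 1/w^2) w hw (by fun_prop) (fun x hx => ?_)
    have hx0 : x < 0 := lt_of_le_of_lt hx hw
    have h1 : w^2 ≤ x^2 := by nlinarith
    have h2 : (1:ℝ)/x^2 ≤ 1/w^2 := by
      apply one_div_le_one_div_of_le (by nlinarith) h1
    have h3 : (0:ℝ) ≤ 1/x^2 := by positivity
    rw [abs_of_nonneg (by linarith)]
    linarith
  have := integral_Iic_of_hasDerivAt_of_tendsto'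
    (f := fun x => -stdPhiDens x / x) (a := w)
    (f' := fun x => stdPhiDens x * (1 + 1/x^2)) (m := 0)
    (fun x hx => ?_) hint ?_
  · rw [this, sub_zero]
  · -- derivative
    have hx0 : x ≠ 0 := (lt_of_le_of_lt hx hw).ne
    have h := ((hasDerivAt_stdPhiDens x).neg).div (hasDerivAt_id x) hx0
    refine h.congr_deriv ?_
    have hx2 : x^2 ≠ 0 := pow_ne_zero 2 hx0
    simp only [id_eq, Pi.neg_apply]
    field_simp
    ring
  · -- tendsto 0 at atBot
    have h := (tendsto_stdPhiDens_atBot.mul tendsto_inv_atBot_zero').neg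
    rw [mul_zero, neg_zero] at h
    refine h.congr fun x => ?_
    rw [div_eq_mul_inv, neg_mul]

lemma mills_FTC_lower {w : ℝ} (hw : w < 0) :
    ∫ x in Iic w, stdPhiDens x * (1 - 3/x^4) = -stdPhiDens w / w + stdPhiDens w / w^3 := by
  have hint : IntegrableOn (fun x => stdPhiDens x * (1 - 3/x^4)) (Iic w) := by
    refine integrableOn_stdPhiDens_mul (c := 1 + 3/w^4) w hw (by fun_prop) (fun x hx => ?_)
    have hx0 : x < 0 := lt_of_le_of_lt hx hw
    have h1 : w^2 ≤ x^2 := by nlinarith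
    have h1' : w^4 ≤ x^4 := by nlinarith
    have h2 : (3:ℝ)/x^4 ≤ 3/w^4 := by
      apply div_le_div_of_nonneg_left (by norm_num) (by nlinarith [sq_nonneg (w^2), sq_nonneg w, pow_pos (neg_pos.2 hw) 4, show w^4 = (-w)^4 by ring]) h1'
    have h3 : (0:ℝ) ≤ 3/x^4 := by positivity
    rw [abs_le]
    constructor <;> nlinarith
  have := integral_Iic_of_hasDerivAt_of_tendsto'
    (f := fun x => -stdPhiDens x / x + stdPhiDens x / x^3) (a := w)
    (f' := fun x => stdPhiDens x * (1 - 3/x^4)) (m := 0)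
    (fun x hx => ?_) hint ?_
  · rw [this, sub_zero]
  · have hx0 : x ≠ 0 := (lt_of_le_of_lt hx hw).ne
    have h1 := ((hasDerivAt_stdPhiDens x).neg).div (hasDerivAt_id x) hx0
    have h2 := (hasDerivAt_stdPhiDens x).div (hasDerivAt_pow 3 x) (pow_ne_zero 3 hx0)
    have h := h1.add h2
    refine h.congr_deriv ?_
    have hx2 : x^2 ≠ 0 := pow_ne_zero 2 hx0
    simp only [id_eq, Pi.neg_apply]
    field_simp
    ring
  · have ha := (tendsto_stdPhiDens_atBot.mul tendsto_inv_atBot_zero').neg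
    rw [mul_zero, neg_zero] at ha
    have hb := tendsto_stdPhiDens_atBot.mul (tendsto_inv_atBot_zero'.pow 3)
    rw [zero_pow three_ne_zero, mul_zero] at hb
    have h := ha.add hb
    rw [add_zero] at h
    refine h.congr fun x => ?_
    rw [div_eq_mul_inv, neg_mul, div_eq_mul_inv, inv_pow]

lemma mills_upper {w : ℝ} (hw : w < 0) : stdPhi w ≤ -stdPhiDens w / w := by
  rw [← mills_FTC_upper hw]
  refine setIntegral_mono_on integrable_stdPhiDens.integrableOn ?_ measurableSet_Iic
    (fun x hx => ?_)
  · refine integrableOn_stdPhiDens_mul (c := 1 + 1/w^2) w hw (by fun_prop) (fun x hx => ?_)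
    have hx0 : x < 0 := lt_of_le_of_lt hx hw
    have h1 : w^2 ≤ x^2 := by nlinarith
    have h2 : (1:ℝ)/x^2 ≤ 1/w^2 := one_div_le_one_div_of_le (by nlinarith) h1
    have h3 : (0:ℝ) ≤ 1/x^2 := by positivity
    rw [abs_of_nonneg (by linarith)]
    linarith
  · have hx0 : x < 0 := lt_of_le_of_lt hx hw
    have h3 : (0:ℝ) ≤ 1/x^2 := by positivity
    nlinarith [stdPhiDens_pos x]

lemma mills_lower {w : ℝ} (hw : w < 0) :
    -stdPhiDens w / w + stdPhiDens w / w^3 ≤ stdPhi w := by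
  rw [← mills_FTC_lower hw]
  refine setIntegral_mono_on ?_ integrable_stdPhiDens.integrableOn measurableSet_Iic
    (fun x hx => ?_)
  · refine integrableOn_stdPhiDens_mul (c := 1 + 3/w^4) w hw (by fun_prop) (fun x hx => ?_)
    have hx0 : x < 0 := lt_of_le_of_lt hx hw
    have h1 : w^2 ≤ x^2 := by nlinarith
    have h1' : w^4 ≤ x^4 := by nlinarith
    have h2 : (3:ℝ)/x^4 ≤ 3/w^4 :=
      div_le_div_of_nonneg_left (by norm_num) (by nlinarith [sq_nonneg (w^2), sq_nonneg w, pow_pos (neg_pos.2 hw) 4, show w^4 = (-w)^4 by ring]) h1'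
    have h3 : (0:ℝ) ≤ 3/x^4 := by positivity
    rw [abs_le]
    constructor <;> nlinarith
  · have hx0 : x < 0 := lt_of_le_of_lt hx hw
    have h3 : (0:ℝ) ≤ 3/x^4 := by positivity
    nlinarith [stdPhiDens_pos x]

lemma tendsto_Ksub (K₀ : ℝ → ℝ) (α : EReal) (hα : 0 < α)
    (hsmooth : ContDiffOn ℝ (⊤ : ℕ∞) K₀ {s : ℝ | -α < (s : EReal)})
    (hsteep : Tendsto (deriv K₀) atTop atTop) (y : ℝ) :
    Tendsto (fun θ => K₀ θ - θ * y) atTop atTop := by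
  obtain ⟨θ₀, hθ₀⟩ := eventually_atTop.1 (hsteep.eventually_ge_atTop (y + 1))
  set θ₁ := max θ₀ 0 with hθ₁def
  have hθ₁0 : (0:ℝ) ≤ θ₁ := le_max_right _ _
  have hopen : IsOpen {s : ℝ | -α < (s : EReal)} :=
    isOpen_Ioi.preimage continuous_coe_real_ereal
  have hmem : ∀ s : ℝ, 0 ≤ s → s ∈ {s : ℝ | -α < (s : EReal)} := by
    intro s hs
    have h0 : -α < ((0:ℝ) : EReal) := by
      rw [show ((0:ℝ):EReal) = (0:EReal) by simp]
      exact EReal.neg_lt_comm.mpr (by simpa using hα)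
    exact lt_of_lt_of_le h0 (EReal.coe_le_coe_iff.2 hs)
  have hdiff : ∀ s : ℝ, 0 ≤ s → DifferentiableAt ℝ K₀ s := fun s hs =>
    (hsmooth.differentiableOn (by simp)).differentiableAt (hopen.mem_nhds (hmem s hs))
  have hmono : MonotoneOn (fun θ => K₀ θ - (y + 1) * θ) (Ici θ₁) := by
    refine monotoneOn_of_deriv_nonneg (convex_Ici θ₁) ?_ ?_ ?_
    · intro s hs
      exact ((hdiff s (le_trans hθ₁0 hs)).sub
        ((differentiableAt_id.const_mul _))).continuousAt.continuousWithinAt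
    · intro s hs
      rw [interior_Ici] at hs
      exact ((hdiff s (le_trans hθ₁0 hs.le)).sub
        ((differentiableAt_id.const_mul _))).differentiableWithinAt
    · intro s hs
      rw [interior_Ici] at hs
      have hd : HasDerivAt (fun θ => K₀ θ - (y + 1) * θ) (deriv K₀ s - (y + 1)) s := by
        have h1 := (hdiff s (le_trans hθ₁0 hs.le)).hasDerivAt
        have h2 := (hasDerivAt_id s).const_mul (y + 1)
        exact (h1.sub h2).congr_deriv (by simp)
      rw [hd.deriv]
      have := hθ₀ s (le_trans (le_max_left _ _) hs.le)
      linarith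
  set c := K₀ θ₁ - (y + 1) * θ₁ with hc
  have hbound : ∀ᶠ θ in atTop, θ + c ≤ K₀ θ - θ * y := by
    filter_upwards [eventually_ge_atTop θ₁] with θ hθ
    have := hmono (self_mem_Ici) hθ hθ
    simp only at this
    nlinarith
  exact tendsto_atTop_mono' _ hbound (tendsto_atTop_add_const_right _ c tendsto_id)

lemma key_tendsto (K₀ : ℝ → ℝ) (y t : ℝ) (hK'' : 0 < deriv (deriv K₀) t)
    (hg : Tendsto (fun θ => (t - θ) * y - K₀ t + K₀ θ) atTop atTop)
    (huw : Tendsto (fun θ => uLR K₀ θ t / (wLR K₀ θ y t) ^ 3) atTop (nhds 0)) :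
    Tendsto (fun θ => θ * Real.exp (-θ * y) * (Real.exp (K₀ θ) * FhatLR K₀ θ y t))
      atTop (nhds (fhatSP K₀ y t)) := by
  set s := Real.sqrt (deriv (deriv K₀) t) with hs
  have hs0 : 0 < s := Real.sqrt_pos.2 hK''
  set E := Real.exp (K₀ t - t * y) / Real.sqrt (2 * Real.pi) with hE
  have hsqrt2pi : (0:ℝ) < Real.sqrt (2 * Real.pi) := by
    have := Real.pi_pos; positivity
  have hE0 : 0 < E := by rw [hE]; positivity
  have hfhat : fhatSP K₀ y t = E / s := by
    rw [fhatSP, hE, hs, Real.sqrt_mul (by positivity : (0:ℝ) ≤ 2 * Real.pi)]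
    field_simp
  -- main fraction limit
  have hfrac : Tendsto (fun θ : ℝ => θ / (θ - t)) atTop (nhds 1) := by
    have h1 : Tendsto (fun θ : ℝ => θ - t) atTop atTop :=
      tendsto_atTop_add_const_right _ (-t) tendsto_id
    have h2 : Tendsto (fun θ : ℝ => t * (θ - t)⁻¹) atTop (nhds 0) := by
      simpa using (h1.inv_tendsto_atTop).const_mul t
    have h3 := (tendsto_const_nhds (x := (1:ℝ)) (f := atTop)).add h2
    rw [add_zero] at h3
    refine Tendsto.congr' ?_ h3
    filter_upwards [eventually_gt_atTop t] with θ hθ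
    have hne : θ - t ≠ 0 := by linarith
    field_simp
    ring
  have hq : Tendsto (fun θ : ℝ => θ / ((θ - t) * s)) atTop (nhds (1 / s)) := by
    have := hfrac.div_const s
    refine this.congr fun θ => ?_
    rw [div_div]
  -- the eventual description
  have hev : ∀ᶠ θ in atTop, 1 ≤ (t - θ) * y - K₀ t + K₀ θ ∧ t < θ ∧ 0 ≤ θ := by
    filter_upwards [hg.eventually_ge_atTop 1, eventually_gt_atTop t, eventually_ge_atTop 0]
      with θ h1 h2 h3
    exact ⟨h1, h2, h3⟩
  -- pointwise facts
  have hfacts : ∀ᶠ θ in atTop,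
      wLR K₀ θ y t < 0 ∧
      Real.exp (K₀ θ) * stdPhiDens (wLR K₀ θ y t) = Real.exp (θ * y) * E ∧
      uLR K₀ θ t = (t - θ) * s := by
    filter_upwards [hev] with θ ⟨h1, h2, _⟩
    have hgpos : 0 < 2 * ((t - θ) * y - K₀ t + K₀ θ) := by linarith
    have hwdef : wLR K₀ θ y t = -Real.sqrt (2 * ((t - θ) * y - K₀ t + K₀ θ)) := by
      rw [wLR, Real.sign_of_neg (by linarith : t - θ < 0), neg_one_mul]
    have hwneg : wLR K₀ θ y t < 0 := by
      rw [hwdef, neg_lt, neg_zero]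
      exact Real.sqrt_pos.2 hgpos
    refine ⟨hwneg, ?_, rfl⟩
    have hwsq : (wLR K₀ θ y t) ^ 2 = 2 * ((t - θ) * y - K₀ t + K₀ θ) := by
      rw [hwdef, neg_sq, Real.sq_sqrt hgpos.le]
    rw [stdPhiDens, hwsq, hE, mul_div_assoc', mul_div_assoc']
    congr 1
    rw [← Real.exp_add, ← Real.exp_add, Real.exp_eq_exp]
    ring
  -- the remainder R
  have hexp1 : ∀ θ : ℝ, Real.exp (-θ * y) * Real.exp (θ * y) = 1 := by
    intro θ
    rw [← Real.exp_add, show -θ * y + θ * y = 0 by ring, Real.exp_zero]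
  set R : ℝ → ℝ := fun θ => θ * Real.exp (-θ * y) * Real.exp (K₀ θ) *
      (stdPhi (wLR K₀ θ y t) + stdPhiDens (wLR K₀ θ y t) / (wLR K₀ θ y t)) with hR
  set bnd : ℝ → ℝ := fun θ =>
      E * (uLR K₀ θ t / (wLR K₀ θ y t) ^ 3) * (θ / ((θ - t) * s)) with hbnd
  have hbnd_tendsto : Tendsto bnd atTop (nhds 0) := by
    have := (huw.const_mul E).mul hq
    simpa using this
  have hRbound : ∀ᶠ θ in atTop, ‖R θ‖ ≤ bnd θ := by
    filter_upwards [hfacts, hev, eventually_gt_atTop t, eventually_ge_atTop 0]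
      with θ hf he hθt hθ0
    obtain ⟨hwneg, hφK, hu⟩ := hf
    have hne1 : θ - t ≠ 0 := by linarith
    have hφpos := stdPhiDens_pos (wLR K₀ θ y t)
    have hw3 : (wLR K₀ θ y t) ^ 3 < 0 := by
      have h := pow_pos (neg_pos.2 hwneg) 3
      nlinarith
    have hMu := mills_upper hwneg
    have hMl := mills_lower hwneg
    have hdivneg : stdPhiDens (wLR K₀ θ y t) / (wLR K₀ θ y t) ^ 3 ≤ 0 :=
      div_nonpos_of_nonneg_of_nonpos hφpos.le hw3.le
    rw [neg_div] at hMu hMl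
    have habs : |stdPhi (wLR K₀ θ y t) + stdPhiDens (wLR K₀ θ y t) / (wLR K₀ θ y t)|
        ≤ -(stdPhiDens (wLR K₀ θ y t) / (wLR K₀ θ y t) ^ 3) := by
      rw [abs_le]
      constructor
      · linarith
      · linarith
    have hpos : (0:ℝ) ≤ θ * Real.exp (-θ * y) * Real.exp (K₀ θ) := by positivity
    have h1 : ‖R θ‖ ≤ θ * Real.exp (-θ * y) * Real.exp (K₀ θ) *
        -(stdPhiDens (wLR K₀ θ y t) / (wLR K₀ θ y t) ^ 3) := by
      rw [hR]
      rw [Real.norm_eq_abs, abs_mul, abs_of_nonneg hpos]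
      exact mul_le_mul_of_nonneg_left habs hpos
    have step1 : θ * Real.exp (-θ * y) * Real.exp (K₀ θ) *
        -(stdPhiDens (wLR K₀ θ y t) / (wLR K₀ θ y t) ^ 3)
        = -(θ * E / (wLR K₀ θ y t) ^ 3) := by
      rw [show θ * Real.exp (-θ * y) * Real.exp (K₀ θ) *
            -(stdPhiDens (wLR K₀ θ y t) / (wLR K₀ θ y t) ^ 3)
          = Real.exp (K₀ θ) * stdPhiDens (wLR K₀ θ y t) *
            -(θ * Real.exp (-θ * y) / (wLR K₀ θ y t) ^ 3) by ring, hφK,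
        show Real.exp (θ * y) * E * -(θ * Real.exp (-θ * y) / (wLR K₀ θ y t) ^ 3)
          = Real.exp (-θ * y) * Real.exp (θ * y) * -(θ * E / (wLR K₀ θ y t) ^ 3) by ring,
        hexp1, one_mul]
    have halg : ∀ (E' w3 A θ' : ℝ), A ≠ 0 → E' * (-A / w3) * (θ' / A) = -(θ' * E' / w3) := by
      intro E' w3 A θ' hA
      field_simp
    have step2 : bnd θ = -(θ * E / (wLR K₀ θ y t) ^ 3) := by
      rw [hbnd]
      simp only
      rw [hu, show (t - θ) * s = -((θ - t) * s) by ring]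
      exact halg E ((wLR K₀ θ y t) ^ 3) ((θ - t) * s) θ (mul_ne_zero hne1 hs0.ne')
    rw [step2]
    rw [step1] at h1
    exact h1
  have hRtendsto : Tendsto R atTop (nhds 0) := squeeze_zero_norm' hRbound hbnd_tendsto
  have hB : Tendsto (fun θ : ℝ => E * (θ / ((θ - t) * s))) atTop (nhds (E * (1 / s))) :=
    hq.const_mul E
  have hsum := hRtendsto.add hB
  rw [zero_add] at hsum
  have hlim : E * (1 / s) = fhatSP K₀ y t := by rw [hfhat]; ring
  rw [hlim] at hsum
  refine Tendsto.congr' ?_ hsum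
  filter_upwards [hfacts, eventually_gt_atTop t] with θ hf hθt
  obtain ⟨hwneg, hφK, hu⟩ := hf
  rw [hR]
  simp only [FhatLR]
  rw [show θ * Real.exp (-θ * y) * (Real.exp (K₀ θ) *
        (stdPhi (wLR K₀ θ y t) + stdPhiDens (wLR K₀ θ y t) *
          ((wLR K₀ θ y t)⁻¹ - (uLR K₀ θ t)⁻¹)))
      = θ * Real.exp (-θ * y) * Real.exp (K₀ θ) *
          (stdPhi (wLR K₀ θ y t) + stdPhiDens (wLR K₀ θ y t) / (wLR K₀ θ y t)) +
        Real.exp (K₀ θ) * stdPhiDens (wLR K₀ θ y t) *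
          (θ * Real.exp (-θ * y) * -(uLR K₀ θ t)⁻¹) by ring, hφK,
    show Real.exp (θ * y) * E * (θ * Real.exp (-θ * y) * -(uLR K₀ θ t)⁻¹)
      = Real.exp (-θ * y) * Real.exp (θ * y) * (E * θ * -(uLR K₀ θ t)⁻¹) by ring,
    hexp1, one_mul, hu,
    show (t - θ) * s = -((θ - t) * s) by ring, inv_neg]
  ring

/-- **Theorem 4.1(i), right tail, finite upper truncation point**: with `β = ∞`,
steepness, saddlepoints `t_a, t_b`, `F̂₀(b) − F̂₀(a) > 0` and `u_θ/w_θ³ → 0`,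
the LR approximation `M̂_{(a,b)}(θ) = M₀(θ)(F̂_θ(b) − F̂_θ(a))/(F̂₀(b) − F̂₀(a))`
satisfies `M̂_{(a,b)}(θ) ∼ θ⁻¹ e^{θb} f̂₀(b)/(F̂₀(b) − F̂₀(a))` as `θ → ∞`. -/
theorem LR_truncated_mgf_right_tail_finite_upper
    (K₀ : ℝ → ℝ) (α : EReal) (hα : 0 < α)
    -- the convergence strip is (-α, β) with β = ∞; K₀ is smooth and strictly convex there
    (hsmooth : ContDiffOn ℝ (⊤ : ℕ∞) K₀ {s : ℝ | -α < (s : EReal)})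
    (hconv : ∀ s : ℝ, -α < (s : EReal) → 0 < deriv (deriv K₀) s)
    -- steepness in the right tail: K₀'(θ) → ∞ as θ → ∞
    (hsteep : Tendsto (deriv K₀) atTop atTop)
    (a b : ℝ) (hab : a < b)
    (t_a t_b : ℝ) (hta : -α < (t_a : EReal)) (htb : -α < (t_b : EReal))
    (hsa : deriv K₀ t_a = a) (hsb : deriv K₀ t_b = b)
    (hden : 0 < FhatLR K₀ 0 b t_b - FhatLR K₀ 0 a t_a)
    (huwa : Tendsto (fun θ : ℝ => uLR K₀ θ t_a / (wLR K₀ θ a t_a) ^ 3) atTop (nhds 0))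
    (huwb : Tendsto (fun θ : ℝ => uLR K₀ θ t_b / (wLR K₀ θ b t_b) ^ 3) atTop (nhds 0)) :
    Tendsto (fun θ : ℝ => θ * Real.exp (-θ * b) *
        (Real.exp (K₀ θ) * (FhatLR K₀ θ b t_b - FhatLR K₀ θ a t_a)
          / (FhatLR K₀ 0 b t_b - FhatLR K₀ 0 a t_a)))
      atTop (nhds (fhatSP K₀ b t_b / (FhatLR K₀ 0 b t_b - FhatLR K₀ 0 a t_a))) := by
  have hgb : Tendsto (fun θ => (t_b - θ) * b - K₀ t_b + K₀ θ) atTop atTop := by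
    have h1 := tendsto_Ksub K₀ α hα hsmooth hsteep b
    have h2 := tendsto_atTop_add_const_right atTop (t_b * b - K₀ t_b) h1
    refine h2.congr fun θ => ?_
    ring
  have hga : Tendsto (fun θ => (t_a - θ) * a - K₀ t_a + K₀ θ) atTop atTop := by
    have h1 := tendsto_Ksub K₀ α hα hsmooth hsteep a
    have h2 := tendsto_atTop_add_const_right atTop (t_a * a - K₀ t_a) h1
    refine h2.congr fun θ => ?_
    ring
  have hAb := key_tendsto K₀ b t_b (hconv t_b htb) hgb huwb
  have hAa := key_tendsto K₀ a t_a (hconv t_a hta) hga huwa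
  have hE0 : Tendsto (fun θ : ℝ => Real.exp (θ * (a - b))) atTop (nhds 0) := by
    refine Real.tendsto_exp_atBot.comp ?_
    exact tendsto_id.atTop_mul_const_of_neg (by linarith)
  have hcomb := (hAb.sub (hE0.mul hAa)).div_const (FhatLR K₀ 0 b t_b - FhatLR K₀ 0 a t_a)
  rw [zero_mul, sub_zero] at hcomb
  refine hcomb.congr fun θ => ?_
  have he : Real.exp (θ * (a - b)) * Real.exp (-θ * a) = Real.exp (-θ * b) := by
    rw [← Real.exp_add]
    congr 1
    ring
  rw [← he]
  ring
end

section
/- Theorem 4.1(i), right tail with infinite upper truncation point: assume β = ∞, steepness (K₀'(θ) → ∞ as θ → ∞), that a saddlepoint t_a exists with K₀'(t_a) = a, that 1 − F̂₀(a) > 0, and that u_θ(a)/w_θ(a)³ → 0 as θ → ∞. Then F̂_θ(a) → 0 as θ → ∞, and consequently M̂_{(a,∞)}(θ) ∼ M₀(θ) / (1 − F̂₀(a)) as θ → ∞, where M̂_{(a,∞)}(θ) = M₀(θ)(1 − F̂_θ(a))/(1 − F̂₀(a)). -/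
open MeasureTheory Set Filter

lemma stdPhi_nonneg (x : ℝ) : 0 ≤ stdPhi x := by
  refine integral_nonneg fun t => ?_
  exact div_nonneg (Real.exp_nonneg _) (Real.sqrt_nonneg _)

lemma stdPhi_tendsto_zero : Tendsto stdPhi atBot (nhds 0) := by
  have hC : (0:ℝ) < Real.sqrt (2 * Real.pi) :=
    Real.sqrt_pos.2 (by positivity)
  have hbound : ∀ᶠ x in atBot, stdPhi x ≤ Real.exp x / Real.sqrt (2 * Real.pi) := by
    filter_upwards [eventually_le_atBot (-2 : ℝ)] with x hx
    have h1 : stdPhi x ≤ ∫ t in Iic x, Real.exp t / Real.sqrt (2 * Real.pi) := by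
      refine setIntegral_mono_on integrable_stdPhiDens.integrableOn
        ((integrableOn_exp_Iic x).div_const _) measurableSet_Iic fun t ht => ?_
      have ht2 : t ≤ -2 := le_trans ht hx
      have h3 : -t ^ 2 / 2 ≤ t := by nlinarith
      unfold stdPhiDens
      gcongr
    calc stdPhi x ≤ ∫ t in Iic x, Real.exp t / Real.sqrt (2 * Real.pi) := h1
      _ = (∫ t in Iic x, Real.exp t) / Real.sqrt (2 * Real.pi) := by
          rw [integral_div]
      _ = Real.exp x / Real.sqrt (2 * Real.pi) := by rw [integral_exp_Iic]
  have hlim : Tendsto (fun x => Real.exp x / Real.sqrt (2 * Real.pi)) atBot (nhds 0) := by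
    simpa using Real.tendsto_exp_atBot.div_const (Real.sqrt (2 * Real.pi))
  exact squeeze_zero' (Eventually.of_forall stdPhi_nonneg) hbound hlim

lemma stdPhiDens_le (x : ℝ) : stdPhiDens x ≤ (Real.sqrt (2 * Real.pi))⁻¹ := by
  have hC : (0:ℝ) < Real.sqrt (2 * Real.pi) := Real.sqrt_pos.2 (by positivity)
  unfold stdPhiDens
  rw [div_le_iff₀ hC, inv_mul_cancel₀ hC.ne']
  exact Real.exp_le_one_iff.2 (by nlinarith [sq_nonneg x])

lemma stdPhiDens_nonneg (x : ℝ) : 0 ≤ stdPhiDens x :=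
  div_nonneg (Real.exp_nonneg _) (Real.sqrt_nonneg _)

lemma sqrt_tendsto_atTop : Tendsto Real.sqrt atTop atTop := by
  refine tendsto_atTop_atTop.2 fun b => ⟨b ^ 2, fun x hx => ?_⟩
  calc b ≤ |b| := le_abs_self b
    _ = Real.sqrt (b ^ 2) := (Real.sqrt_sq_eq_abs b).symm
    _ ≤ Real.sqrt x := Real.sqrt_le_sqrt hx

/-- **Theorem 4.1(i), right tail, infinite upper truncation point**: with `β = ∞`,
steepness, saddlepoint `t_a`, `1 − F̂₀(a) > 0` and `u_θ(a)/w_θ(a)³ → 0`, one has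
`F̂_θ(a) → 0` as `θ → ∞`, and consequently the LR approximation
`M̂_{(a,∞)}(θ) = M₀(θ)(1 − F̂_θ(a))/(1 − F̂₀(a))` satisfies
`M̂_{(a,∞)}(θ) ∼ M₀(θ)/(1 − F̂₀(a))` as `θ → ∞`. -/
theorem LR_truncated_mgf_right_tail_infinite_upper
    (K₀ : ℝ → ℝ) (α : EReal) (hα : 0 < α)
    (hsmooth : ContDiffOn ℝ (⊤ : ℕ∞) K₀ {s : ℝ | -α < (s : EReal)})
    (hconv : ∀ s : ℝ, -α < (s : EReal) → 0 < deriv (deriv K₀) s)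
    (hsteep : Tendsto (deriv K₀) atTop atTop)
    (a : ℝ) (t_a : ℝ) (hta : -α < (t_a : EReal)) (hsa : deriv K₀ t_a = a)
    (hden : 0 < 1 - FhatLR K₀ 0 a t_a)
    (huwa : Tendsto (fun θ : ℝ => uLR K₀ θ t_a / (wLR K₀ θ a t_a) ^ 3) atTop (nhds 0)) :
    Tendsto (fun θ : ℝ => FhatLR K₀ θ a t_a) atTop (nhds 0) ∧
      Tendsto (fun θ : ℝ =>
          (Real.exp (K₀ θ) * (1 - FhatLR K₀ θ a t_a) / (1 - FhatLR K₀ 0 a t_a))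
            / (Real.exp (K₀ θ) / (1 - FhatLR K₀ 0 a t_a)))
        atTop (nhds 1) := by
  set U : Set ℝ := {s : ℝ | -α < (s : EReal)} with hUdef
  have hU : IsOpen U := by
    have : U = (fun s : ℝ => (s : EReal)) ⁻¹' (Ioi (-α)) := rfl
    rw [this]
    exact isOpen_Ioi.preimage continuous_coe_real_ereal
  have hsub : ∀ s : ℝ, 0 ≤ s → s ∈ U := by
    intro s hs
    have h1 : -α < (0 : EReal) := by
      rw [EReal.neg_lt_comm]
      simpa using hα
    exact lt_of_lt_of_le h1 (by exact_mod_cast hs)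
  have hdiffAt : ∀ s ∈ U, DifferentiableAt ℝ K₀ s := fun s hs =>
    (hsmooth.contDiffAt (hU.mem_nhds hs)).differentiableAt (by simp)
  have hderiv_contOn : ContinuousOn (deriv K₀) U :=
    hsmooth.continuousOn_deriv_of_isOpen hU (by simp)
  -- choose s₀
  obtain ⟨s₀, hs₀⟩ := ((hsteep.eventually_ge_atTop (a + 1)).and
    (eventually_ge_atTop (0 : ℝ))).exists
  obtain ⟨hs₀1, hs₀0⟩ := hs₀
  have hIciU : Ici s₀ ⊆ U := fun x hx => hsub x (le_trans hs₀0 hx)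
  have hmono : StrictMonoOn (deriv K₀) (Ici s₀) := by
    refine strictMonoOn_of_deriv_pos (convex_Ici s₀) (hderiv_contOn.mono hIciU) fun x hx => ?_
    rw [interior_Ici] at hx
    exact hconv x (hsub x (le_trans hs₀0 (le_of_lt hx)))
  have hKmono : MonotoneOn (fun x => K₀ x - (a + 1) * x) (Ici s₀) := by
    have hcont : ContinuousOn (fun x => K₀ x - (a + 1) * x) (Ici s₀) :=
      (hsmooth.continuousOn.mono hIciU).sub (continuous_const.mul continuous_id).continuousOn
    have hdA : ∀ x ∈ interior (Ici s₀),
        HasDerivAt (fun x => K₀ x - (a + 1) * x) (deriv K₀ x - (a + 1)) x := by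
      intro x hx
      rw [interior_Ici] at hx
      have h1 : HasDerivAt K₀ (deriv K₀ x) x :=
        (hdiffAt x (hIciU (le_of_lt hx : s₀ ≤ x))).hasDerivAt
      have h2 : HasDerivAt (fun y : ℝ => (a + 1) * y) ((a + 1) * 1) x :=
        (hasDerivAt_id x).const_mul (a + 1)
      have h3 := h1.sub h2
      rw [mul_one] at h3
      exact h3
    refine monotoneOn_of_deriv_nonneg (convex_Ici s₀) hcont
      (fun x hx => ((hdA x hx).differentiableAt).differentiableWithinAt) fun x hx => ?_
    rw [(hdA x hx).deriv]
    rw [interior_Ici] at hx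
    have := hmono (self_mem_Ici) (le_of_lt hx : s₀ ≤ x) hx
    linarith
  -- the quantity inside the square root tends to infinity
  set g : ℝ → ℝ := fun θ => (t_a - θ) * a - K₀ t_a + K₀ θ with hgdef
  have hg : Tendsto g atTop atTop := by
    have hev : ∀ᶠ θ in atTop, θ + (K₀ s₀ - (a + 1) * s₀ + t_a * a - K₀ t_a) ≤ g θ := by
      filter_upwards [eventually_ge_atTop s₀] with θ hθ
      have := hKmono self_mem_Ici hθ hθ
      simp only [hgdef]
      ring_nf
      ring_nf at this
      linarith
    exact tendsto_atTop_mono' atTop hev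
      (tendsto_atTop_add_const_right atTop _ tendsto_id)
  have hwneg : ∀ᶠ θ in atTop, wLR K₀ θ a t_a = -Real.sqrt (2 * g θ) := by
    filter_upwards [eventually_gt_atTop t_a] with θ hθ
    unfold wLR
    rw [Real.sign_of_neg (by linarith)]
    ring_nf
    simp only [hgdef]
    ring_nf
  have hw : Tendsto (fun θ => wLR K₀ θ a t_a) atTop atBot := by
    have h1 : Tendsto (fun θ => Real.sqrt (2 * g θ)) atTop atTop :=
      sqrt_tendsto_atTop.comp (hg.const_mul_atTop two_pos)
    have h2 : Tendsto (fun θ => -Real.sqrt (2 * g θ)) atTop atBot :=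
      tendsto_neg_atTop_atBot.comp h1
    exact h2.congr' (hwneg.mono fun _ h => h.symm)
  -- inverse of w tends to 0
  have hwinv : Tendsto (fun θ => (wLR K₀ θ a t_a)⁻¹) atTop (nhds 0) := by
    have h1 : Tendsto (fun θ => -wLR K₀ θ a t_a) atTop atTop :=
      tendsto_neg_atBot_atTop.comp hw
    have h2 := h1.inv_tendsto_atTop
    have : (fun θ => (-wLR K₀ θ a t_a)⁻¹) = fun θ => -(wLR K₀ θ a t_a)⁻¹ := by
      funext θ; rw [inv_neg]
    rw [Pi.inv_def] at h2
    simp only [this] at h2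
    simpa using h2.neg
  -- inverse of u tends to 0
  have huinv : Tendsto (fun θ => (uLR K₀ θ t_a)⁻¹) atTop (nhds 0) := by
    have h1 : Tendsto (fun θ : ℝ => θ - t_a) atTop atTop :=
      tendsto_atTop_add_const_right atTop (-t_a) tendsto_id
    have h2 := h1.inv_tendsto_atTop
    rw [Pi.inv_def] at h2
    have h3 : Tendsto (fun θ : ℝ => -((θ - t_a)⁻¹ * (Real.sqrt (deriv (deriv K₀) t_a))⁻¹))
        atTop (nhds 0) := by
      simpa using (h2.mul_const (Real.sqrt (deriv (deriv K₀) t_a))⁻¹).neg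
    refine h3.congr fun θ => ?_
    unfold uLR
    rw [mul_inv]
    have : (t_a - θ)⁻¹ = -(θ - t_a)⁻¹ := by
      rw [← inv_neg]; ring_nf
    rw [this]; ring
  -- the correction term tends to 0
  have hterm2 : Tendsto (fun θ => stdPhiDens (wLR K₀ θ a t_a) *
      ((wLR K₀ θ a t_a)⁻¹ - (uLR K₀ θ t_a)⁻¹)) atTop (nhds 0) := by
    have hd : Tendsto (fun θ => (wLR K₀ θ a t_a)⁻¹ - (uLR K₀ θ t_a)⁻¹) atTop (nhds 0) := by
      simpa using hwinv.sub huinv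
    have hd2 : Tendsto (fun θ => (Real.sqrt (2 * Real.pi))⁻¹ *
        |(wLR K₀ θ a t_a)⁻¹ - (uLR K₀ θ t_a)⁻¹|) atTop (nhds 0) := by
      simpa using ((hd.abs).const_mul (Real.sqrt (2 * Real.pi))⁻¹)
    refine squeeze_zero_norm (fun θ => ?_) hd2
    rw [Real.norm_eq_abs, abs_mul, abs_of_nonneg (stdPhiDens_nonneg _)]
    exact mul_le_mul_of_nonneg_right (stdPhiDens_le _) (abs_nonneg _)
  have part1 : Tendsto (fun θ : ℝ => FhatLR K₀ θ a t_a) atTop (nhds 0) := by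
    have h1 : Tendsto (fun θ => stdPhi (wLR K₀ θ a t_a)) atTop (nhds 0) :=
      stdPhi_tendsto_zero.comp hw
    have := h1.add hterm2
    simpa [FhatLR] using this
  refine ⟨part1, ?_⟩
  have heq : ∀ θ : ℝ,
      (Real.exp (K₀ θ) * (1 - FhatLR K₀ θ a t_a) / (1 - FhatLR K₀ 0 a t_a))
        / (Real.exp (K₀ θ) / (1 - FhatLR K₀ 0 a t_a)) = 1 - FhatLR K₀ θ a t_a := by
    intro θ
    have hE : Real.exp (K₀ θ) ≠ 0 := Real.exp_ne_zero _
    have hD : 1 - FhatLR K₀ 0 a t_a ≠ 0 := ne_of_gt hden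
    field_simp
  have h2 : Tendsto (fun θ : ℝ => 1 - FhatLR K₀ θ a t_a) atTop (nhds 1) := by
    simpa using part1.const_sub 1
  exact h2.congr fun θ => (heq θ).symm
end

section
/- Key lemma in the proof of Theorem 4.2(i): suppose K₀' is continuous and strictly increasing on (-α, β) with K₀'(s) → −∞ as s ↓ −α and K₀'(s) → ∞ as s ↑ β. Fix y ∈ ℝ and let t_y ∈ (-α, β) satisfy K₀'(t_y) = y. For each θ ∈ (-α, ∞), let s_{1,θ} be the unique point of (-α, min(β, θ)) satisfying K₀'(s_{1,θ}) + 1/(θ − s_{1,θ}) = y. Then s_{1,θ} → t_y as θ → ∞. -/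
open MeasureTheory Set Filter

/-- The filter on ℝ describing approach to the (possibly infinite) left endpoint
`-α` of the convergence strip from the right: `s ↓ -α`. -/
noncomputable def towardsLowerEndpoint (α : EReal) : Filter ℝ :=
  Filter.comap (fun s : ℝ => (s : EReal)) (nhdsWithin (-α) (Set.Ioi (-α)))

/-- The filter on ℝ describing approach to the (possibly infinite) right endpoint
`β` of the convergence strip from the left: `s ↑ β`. -/
noncomputable def towardsUpperEndpoint (β : EReal) : Filter ℝ :=
  Filter.comap (fun s : ℝ => (s : EReal)) (nhdsWithin β (Set.Iio β))

open Topology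

/-! The defining equation says `K₀'(s_{1,θ}) = y - 1/(θ - s_{1,θ}) < y = K₀'(t_y)`, so
`s_{1,θ} < t_y` by strict monotonicity. Conversely, if `s_{1,θ} ≤ b < t_y` then
`1/(θ - s_{1,θ}) ≥ y - K₀'(b) > 0`, which bounds `θ` by `b + 1/(y - K₀'(b))`; hence for
large `θ` the point `s_{1,θ}` lies above any `b < t_y`. -/

lemma lt_of_strictMonoOn_add_inv_sub_eq {f : ℝ → ℝ} {S : Set ℝ} (hf : StrictMonoOn f S)
    {s t θ : ℝ} (hs : s ∈ S) (ht : t ∈ S) (hsθ : s < θ) (heq : f s + (θ - s)⁻¹ = f t) :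
    s < t :=
  (hf.lt_iff_lt hs ht).mp (by linarith [inv_pos.mpr (sub_pos.mpr hsθ)])

lemma lt_of_monotoneOn_add_inv_sub_eq {f : ℝ → ℝ} {S : Set ℝ} (hf : MonotoneOn f S)
    {b s c θ : ℝ} (hb : b ∈ S) (hs : s ∈ S) (hfb : f b < c) (heq : f s + (θ - s)⁻¹ = c)
    (hθ : b + (c - f b)⁻¹ < θ) : b < s := by
  by_contra! hsb
  have hgap_pos : 0 < (c - f b)⁻¹ := inv_pos.mpr (sub_pos.mpr hfb)
  have hgap_le : c - f b ≤ (θ - s)⁻¹ := by linarith [hf hs hb hsb]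
  have hgap_gt : (θ - s)⁻¹ < c - f b := by
    simpa using inv_strictAnti₀ hgap_pos (show (c - f b)⁻¹ < θ - s by linarith)
  linarith

theorem tendsto_of_strictMonoOn_add_inv_sub_eq {f : ℝ → ℝ} {S : Set ℝ} (hf : StrictMonoOn f S)
    {t : ℝ} (ht : t ∈ S) (hS : S ∈ 𝓝[<] t) {s : ℝ → ℝ}
    (hs : ∀ᶠ θ in atTop, s θ ∈ S ∧ s θ < θ ∧ f (s θ) + (θ - s θ)⁻¹ = f t) :
    Tendsto s atTop (𝓝 t) := by
  refine tendsto_order.mpr ⟨fun a ha => ?_, fun a ha => ?_⟩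
  · obtain ⟨l, hlt : l < t, hIoo⟩ := mem_nhdsLT_iff_exists_Ioo_subset.mp hS
    obtain ⟨b, hmax, hbt⟩ := exists_between (max_lt ha hlt)
    have hb : b ∈ S := hIoo ⟨(le_max_right a l).trans_lt hmax, hbt⟩
    have hfb : f b < f t := hf hb ht hbt
    filter_upwards [hs, eventually_gt_atTop (b + (f t - f b)⁻¹)] with θ ⟨hsS, _, heq⟩ hθ
    exact ((le_max_left a l).trans_lt hmax).trans
      (lt_of_monotoneOn_add_inv_sub_eq hf.monotoneOn hb hsS hfb heq hθ)
  · filter_upwards [hs] with θ ⟨hsS, hsθ, heq⟩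
    exact (lt_of_strictMonoOn_add_inv_sub_eq hf hsS ht hsθ heq).trans ha

lemma isOpen_setOf_ereal_coe_mem_Ioo (a b : EReal) :
    IsOpen {s : ℝ | a < (s : EReal) ∧ (s : EReal) < b} :=
  isOpen_Ioo.preimage continuous_coe_real_ereal

theorem saddlepoint_tendsto_t_y_general
    (K₀ : ℝ → ℝ) (α β : EReal)
    (hmono : StrictMonoOn (deriv K₀) {s : ℝ | -α < (s : EReal) ∧ (s : EReal) < β})
    (y t_y : ℝ) (hty₁ : -α < (t_y : EReal)) (hty₂ : (t_y : EReal) < β)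
    (hty : deriv K₀ t_y = y)
    (s₁ : ℝ → ℝ)
    (hs₁ : ∀ θ : ℝ, -α < (θ : EReal) →
      (-α < (s₁ θ : EReal) ∧ (s₁ θ : EReal) < β ∧ s₁ θ < θ) ∧
        deriv K₀ (s₁ θ) + (θ - s₁ θ)⁻¹ = y) :
    Tendsto s₁ atTop (nhds t_y) := by
  have hS : {s : ℝ | -α < (s : EReal) ∧ (s : EReal) < β} ∈ 𝓝[<] t_y :=
    nhdsWithin_le_nhds ((isOpen_setOf_ereal_coe_mem_Ioo _ _).mem_nhds ⟨hty₁, hty₂⟩)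
  refine tendsto_of_strictMonoOn_add_inv_sub_eq hmono ⟨hty₁, hty₂⟩ hS ?_
  filter_upwards [eventually_ge_atTop t_y] with θ hθ
  obtain ⟨⟨hs₁α, hs₁β, hs₁θ⟩, heq⟩ := hs₁ θ (hty₁.trans_le (EReal.coe_le_coe_iff.mpr hθ))
  exact ⟨⟨hs₁α, hs₁β⟩, hs₁θ, hty ▸ heq⟩

/-- **Key lemma in the proof of Theorem 4.2(i)**: if `K₀'` is continuous and strictly
increasing on `(-α, β)` with `K₀'(s) → −∞` as `s ↓ −α` and `K₀'(s) → ∞` as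
`s ↑ β`, `t_y ∈ (-α, β)` satisfies `K₀'(t_y) = y`, and for each `θ ∈ (-α, ∞)`
`s_{1,θ}` is the unique point of `(-α, min(β, θ))` with
`K₀'(s_{1,θ}) + 1/(θ − s_{1,θ}) = y`, then `s_{1,θ} → t_y` as `θ → ∞`. -/
theorem saddlepoint_tendsto_t_y
    (K₀ : ℝ → ℝ) (α β : EReal) (hα : 0 < α) (hβ : 0 < β)
    (hmono : StrictMonoOn (deriv K₀) {s : ℝ | -α < (s : EReal) ∧ (s : EReal) < β})
    (hcont : ContinuousOn (deriv K₀) {s : ℝ | -α < (s : EReal) ∧ (s : EReal) < β})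
    (hbot : Tendsto (deriv K₀) (towardsLowerEndpoint α) atBot)
    (htop : Tendsto (deriv K₀) (towardsUpperEndpoint β) atTop)
    (y t_y : ℝ) (hty₁ : -α < (t_y : EReal)) (hty₂ : (t_y : EReal) < β)
    (hty : deriv K₀ t_y = y)
    (s₁ : ℝ → ℝ)
    (hs₁ : ∀ θ : ℝ, -α < (θ : EReal) →
      (-α < (s₁ θ : EReal) ∧ (s₁ θ : EReal) < β ∧ s₁ θ < θ) ∧
        deriv K₀ (s₁ θ) + (θ - s₁ θ)⁻¹ = y) :
    Tendsto s₁ atTop (nhds t_y) :=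
  saddlepoint_tendsto_t_y_general K₀ α β hmono y t_y hty₁ hty₂ hty s₁ hs₁
end
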